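/- Let λ ∈ ℝ and let V : ℝ → ℝ be twice differentiable; write B(x) = B(x,λ) and let B'(x) and B''(x) denote its first and second entrywise derivatives in x. Then for every x ∈ ℝ and every vector p = (0, 0, c, 0) ∈ ℝ⁴: (i) ⟨p, J (B(x)² + B'(x)) p⟩ = 0, and (ii) ⟨p, J (−2·B(x)³ + B''(x) + 2·B'(x)·B(x) − 2·B(x)·B'(x)) p⟩ = 2c². (These are the values of the second- and third-order crossing forms at a simple nonregular crossing, showing the second-order form vanishes and the third-order form is positive definite.) -/
import Mathlib


open Matrix

/-- The 4×4 standard symplectic matrix `J = [[0, I₂], [-I₂, 0]]`. -/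
def J4 : Matrix (Fin 4) (Fin 4) ℝ :=
  !![0, 0, 1, 0;
     0, 0, 0, 1;
     -1, 0, 0, 0;
     0, -1, 0, 0]

/-- The coefficient matrix `B(x, λ)` of the first-order system associated with the linearized
Swift–Hohenberg eigenvalue problem, with potential `V`. -/
def Bmat (V : ℝ → ℝ) (lam x : ℝ) : Matrix (Fin 4) (Fin 4) ℝ :=
  !![0, 0, 0, 1;
     0, 0, 1, -2;
     -lam - 1 + V x, 0, 0, 0;
     0, 1, 0, 0]

/-- The first entrywise derivative `B'(x)` of `x ↦ B(x, λ)`. -/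
noncomputable def Bmat' (V : ℝ → ℝ) (lam x : ℝ) : Matrix (Fin 4) (Fin 4) ℝ :=
  Matrix.of fun a b => deriv (fun y => Bmat V lam y a b) x

/-- The second entrywise derivative `B''(x)` of `x ↦ B(x, λ)`. -/
noncomputable def Bmat'' (V : ℝ → ℝ) (lam x : ℝ) : Matrix (Fin 4) (Fin 4) ℝ :=
  Matrix.of fun a b => deriv (fun y => Bmat' V lam y a b) x

lemma Bmat'_eq (V : ℝ → ℝ) (lam : ℝ) (hV : ∀ x, DifferentiableAt ℝ V x) (x : ℝ) :
    Bmat' V lam x = !![0,0,0,0; 0,0,0,0; deriv V x,0,0,0; 0,0,0,0] := by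
  have key : deriv (fun y => -lam - 1 + V y) x = deriv V x := deriv_const_add _
  ext a b
  fin_cases a <;> fin_cases b <;>
    simp [Bmat', Bmat, Matrix.vecHead, Matrix.vecTail] <;> exact key

/-- Values of the second- and third-order crossing forms at a simple nonregular crossing:
for `p = (0, 0, c, 0)`, `⟨p, J (B² + B') p⟩ = 0` and
`⟨p, J (-2B³ + B'' + 2B'B - 2BB') p⟩ = 2c²`. -/
theorem stmt_14 (V : ℝ → ℝ) (lam : ℝ)
    (hV : ∀ x, DifferentiableAt ℝ V x)
    (hV' : ∀ x, DifferentiableAt ℝ (deriv V) x) :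
    ∀ x c : ℝ,
      (![0, 0, c, 0] : Fin 4 → ℝ) ⬝ᵥ
          (J4 *ᵥ ((Bmat V lam x * Bmat V lam x + Bmat' V lam x) *ᵥ ![0, 0, c, 0])) = 0 ∧
      (![0, 0, c, 0] : Fin 4 → ℝ) ⬝ᵥ
          (J4 *ᵥ (((-2 : ℝ) • (Bmat V lam x * Bmat V lam x * Bmat V lam x) + Bmat'' V lam x +
            (2 : ℝ) • (Bmat' V lam x * Bmat V lam x) -
            (2 : ℝ) • (Bmat V lam x * Bmat' V lam x)) *ᵥ ![0, 0, c, 0])) = 2 * c ^ 2 := by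
  intro x c
  have h1 := Bmat'_eq V lam hV x
  have h2 : Bmat'' V lam x = !![0,0,0,0; 0,0,0,0; deriv (deriv V) x,0,0,0; 0,0,0,0] := by
    ext a b
    have e : (fun y => Bmat' V lam y a b)
        = fun y => (!![(0:ℝ),0,0,0; 0,0,0,0; deriv V y,0,0,0; 0,0,0,0] : Matrix (Fin 4) (Fin 4) ℝ) a b := by
      funext y; rw [Bmat'_eq V lam hV y]
    fin_cases a <;> fin_cases b <;>
      simp only [Bmat'', Matrix.of_apply, e] <;>
      simp [Matrix.vecHead, Matrix.vecTail]
  constructor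
  · simp [Bmat, h1, J4, Matrix.mul_apply, Matrix.mulVec, dotProduct,
      Fin.sum_univ_four, Matrix.vecHead, Matrix.vecTail]
    try ring
  · simp [Bmat, h1, h2, J4, Matrix.mul_apply, Matrix.mulVec, dotProduct,
      Fin.sum_univ_four, Matrix.add_apply, Matrix.sub_apply, Matrix.smul_apply,
      Matrix.vecHead, Matrix.vecTail]
    try ring
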